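/- arXiv:1608.06203 — 3 statements merged into one kernel-verified Lean document; each statement's English description precedes it below -/
import Mathlib

section
/- Suppose f : ℝ^d → ℝ is twice continuously differentiable and concave, θ̂ maximizes f over a convex set Ω containing θ*, and for every θ on the segment between θ̂ and θ*, the Hessian satisfies Δᵀ H(θ) Δ ≤ −λ‖Δ‖² for all Δ orthogonal to 𝟙, with λ > 0, where Δ = θ̂ − θ* satisfies Δᵀ𝟙 = 0. Then ‖θ̂ − θ*‖ ≤ 2‖∇f(θ*)‖ / λ. -/
open Set RealInnerProductSpace

/-!
At the constrained maximiser `θ̂` the derivative of `f` in the direction `Δ = θ̂ − θ*` is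
nonnegative. Along the segment from `θ*` to `θ̂` the directional derivative `t ↦ Df(θ* + tΔ) Δ`
has slope `D²f(θ* + tΔ) Δ Δ ≤ −λ‖Δ‖²`, so by the mean value theorem
`⟪∇f(θ*), Δ⟫ = Df(θ*) Δ ≥ λ‖Δ‖²`. Cauchy–Schwarz then gives `λ‖Δ‖ ≤ ‖∇f(θ*)‖`.
-/

section

variable {E : Type*} [NormedAddCommGroup E] [NormedSpace ℝ E] {f : E → ℝ}

theorem IsMaxOn.fderiv_apply_sub_nonneg {s : Set E} {a b : E} (hs : Convex ℝ s)
    (hmax : IsMaxOn f s a) (hf : DifferentiableAt ℝ f a) (ha : a ∈ s) (hb : b ∈ s) :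
    0 ≤ fderiv ℝ f a (a - b) := by
  have hcone : b - a ∈ posTangentConeAt s a :=
    sub_mem_posTangentConeAt_of_segment_subset (hs.segment_subset ha hb)
  have hnonpos : fderiv ℝ f a (b - a) ≤ 0 :=
    hmax.localize.hasFDerivWithinAt_nonpos hf.hasFDerivAt.hasFDerivWithinAt hcone
  rw [← neg_sub, map_neg]
  exact neg_nonneg.mpr hnonpos

theorem fderiv_apply_sub_fderiv_apply_le {x y : E} {c : ℝ}
    (hdiff : ∀ z ∈ segment ℝ x y, DifferentiableAt ℝ (fderiv ℝ f) z)
    (hbound : ∀ z ∈ segment ℝ x y, fderiv ℝ (fderiv ℝ f) z (y - x) (y - x) ≤ c) :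
    fderiv ℝ f y (y - x) - fderiv ℝ f x (y - x) ≤ c := by
  set L : ℝ → E := fun t => x + t • (y - x)
  have hL_mem : ∀ t ∈ Icc (0 : ℝ) 1, L t ∈ segment ℝ x y := fun t ht => by
    rw [segment_eq_image']
    exact ⟨t, ht, rfl⟩
  have hL_deriv : ∀ t, HasDerivAt L (y - x) t := fun t => by
    have h := ((hasDerivAt_id t).smul_const (y - x)).const_add x
    rwa [one_smul] at h
  have hslope : ∀ t ∈ Icc (0 : ℝ) 1, HasDerivAt (fun s => fderiv ℝ f (L s) (y - x))
      (fderiv ℝ (fderiv ℝ f) (L t) (y - x) (y - x)) t := fun t ht => by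
    simpa using (((hdiff _ (hL_mem t ht)).hasFDerivAt.comp_hasDerivAt t
      (hL_deriv t)).clm_apply (hasDerivAt_const t (y - x)))
  obtain ⟨t, ht, hmvt⟩ := exists_hasDerivAt_eq_slope _ _ zero_lt_one
    (fun t ht => (hslope t ht).continuousAt.continuousWithinAt)
    (fun t ht => hslope t (Ioo_subset_Icc_self ht))
  have hL0 : L 0 = x := by simp [L]
  have hL1 : L 1 = y := by simp [L]
  rw [hL0, hL1, sub_zero, div_one] at hmvt
  exact hmvt ▸ hbound _ (hL_mem t (Ioo_subset_Icc_self ht))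

end

theorem mul_norm_le_norm_of_mul_sq_le_inner {F : Type*} [NormedAddCommGroup F]
    [InnerProductSpace ℝ F] {g v : F} {c : ℝ} (h : c * ‖v‖ ^ 2 ≤ ⟪g, v⟫) :
    c * ‖v‖ ≤ ‖g‖ := by
  rcases (norm_nonneg v).eq_or_lt with hv | hv
  · simp [← hv]
  · have hcs : c * ‖v‖ * ‖v‖ ≤ ‖g‖ * ‖v‖ := by
      nlinarith [real_inner_le_norm g v]
    exact le_of_mul_le_mul_right hcs hv

theorem argmax_error_bound_general (d : ℕ)
    (f : EuclideanSpace ℝ (Fin d) → ℝ) (hf : ContDiff ℝ 2 f)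
    (Ω : Set (EuclideanSpace ℝ (Fin d))) (hΩ : Convex ℝ Ω)
    (θhat θstar : EuclideanSpace ℝ (Fin d))
    (hθhat : θhat ∈ Ω) (hθstar : θstar ∈ Ω)
    (hmax : ∀ θ ∈ Ω, f θ ≤ f θhat)
    (lam : ℝ) (hlam : 0 < lam)
    (ones : EuclideanSpace ℝ (Fin d))
    (horth : ⟪θhat - θstar, ones⟫ = 0)
    (hhess : ∀ θ ∈ segment ℝ θstar θhat, ∀ Δ : EuclideanSpace ℝ (Fin d),
      ⟪Δ, ones⟫ = 0 → fderiv ℝ (fderiv ℝ f) θ Δ Δ ≤ -lam * ‖Δ‖ ^ 2) :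
    ‖θhat - θstar‖ ≤ 2 * ‖gradient f θstar‖ / lam := by
  have hf' : Differentiable ℝ (fderiv ℝ f) :=
    (hf.fderiv_right (m := 1) (by norm_num)).differentiable one_ne_zero
  have hopt : 0 ≤ fderiv ℝ f θhat (θhat - θstar) :=
    (isMaxOn_iff.mpr hmax).fderiv_apply_sub_nonneg hΩ
      (hf.differentiable (by norm_num) θhat) hθhat hθstar
  have hgrowth := fderiv_apply_sub_fderiv_apply_le (fun z _ => hf' z)
    (fun z hz => hhess z hz _ horth)
  have hinner : lam * ‖θhat - θstar‖ ^ 2 ≤ ⟪gradient f θstar, θhat - θstar⟫ := by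
    rw [inner_gradient_left]
    linarith
  have hbound := mul_norm_le_norm_of_mul_sq_le_inner hinner
  rw [le_div_iff₀ hlam]
  linarith [norm_nonneg (gradient f θstar)]

/-- If `f` is `C²` and concave, `θ̂` maximizes `f` over a convex set `Ω ∋ θ*`,
`Δ = θ̂ − θ*` is orthogonal to `𝟙`, and on the segment between `θ*` and `θ̂` the
Hessian satisfies `Δᵀ H(θ) Δ ≤ −λ‖Δ‖²` for every `Δ ⊥ 𝟙` with `λ > 0`, then
`‖θ̂ − θ*‖ ≤ 2‖∇f(θ*)‖/λ`. -/
theorem argmax_error_bound (d : ℕ)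
    (f : EuclideanSpace ℝ (Fin d) → ℝ) (hf : ContDiff ℝ 2 f)
    (Ω : Set (EuclideanSpace ℝ (Fin d))) (hΩ : Convex ℝ Ω)
    (hconc : ConcaveOn ℝ Ω f)
    (θhat θstar : EuclideanSpace ℝ (Fin d))
    (hθhat : θhat ∈ Ω) (hθstar : θstar ∈ Ω)
    (hmax : ∀ θ ∈ Ω, f θ ≤ f θhat)
    (lam : ℝ) (hlam : 0 < lam)
    (ones : EuclideanSpace ℝ (Fin d)) (hones : ones = WithLp.toLp 2 (fun _ => (1 : ℝ)))
    (horth : ⟪θhat - θstar, ones⟫ = 0)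
    (hhess : ∀ θ ∈ segment ℝ θstar θhat, ∀ Δ : EuclideanSpace ℝ (Fin d),
      ⟪Δ, ones⟫ = 0 → fderiv ℝ (fderiv ℝ f) θ Δ Δ ≤ -lam * ‖Δ‖ ^ 2) :
    ‖θhat - θstar‖ ≤ 2 * ‖gradient f θstar‖ / lam :=
  argmax_error_bound_general d f hf Ω hΩ θhat θstar hθhat hθstar hmax lam hlam ones horth hhess
end

section
/- Let a ranking σ be sampled from the Plackett–Luce model on a set S of κ items with weights θ ∈ ℝ^S satisfying |θᵢ| ≤ b for all i. Then for any item i ∈ S and any position 1 ≤ ℓ ≤ κ−1, the probability that σ⁻¹(i) = ℓ is at most e^{6b}/(κ−ℓ). -/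
open Finset Real

/-- The Plackett–Luce probability of the ranking `σ : Fin κ ≃ Fin κ`
(`σ u` is the item placed in position `u`):
`P(σ) = ∏ᵤ e^{θ(σ u)} / ∑_{u' ≥ u} e^{θ(σ u')}` (the last factor is `1`). -/
noncomputable def PLprob {κ : ℕ} (θ : Fin κ → ℝ) (σ : Equiv.Perm (Fin κ)) : ℝ :=
  ∏ u : Fin κ, Real.exp (θ (σ u)) / ∑ u' ∈ Finset.Ici u, Real.exp (θ (σ u'))

open Equiv Equiv.Perm

/-!
Condition on the item ranked first. The rest of a PL ranking is again PL on the remaining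
items, with the same bound `c` on the spread `θ j - θ k` of the weights, so the probability that
item `i` sits at position `m + 1` among `n + 1` items is an average, over the first item, of
the probability that it sits at position `m` among `n` items. Induction on `n` thus gives the
bound `e^c / (n - m)` for 0-indexed positions; at position `0` it is the choice probability
`e^{θ i} / ∑ e^{θ j} ≤ e^c / n`. For `|θ| ≤ b` the spread is at most `2b`, which gives
`e^{2b} / (κ - ℓ + 1)` at position `ℓ`.
-/

theorem exp_div_sum_exp_le {ι : Type*} [Fintype ι] (θ : ι → ℝ) {c : ℝ}
    (hθ : ∀ j k, θ j - θ k ≤ c) (i : ι) :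
    exp (θ i) / ∑ j, exp (θ j) ≤ exp c / Fintype.card ι := by
  have hS : 0 < ∑ j, exp (θ j) := sum_pos (fun j _ => exp_pos _) ⟨i, mem_univ i⟩
  have hcard : (0 : ℝ) < Fintype.card ι := by exact_mod_cast Fintype.card_pos_iff.mpr ⟨i⟩
  have : ∑ _j : ι, exp (θ i) ≤ ∑ j, exp c * exp (θ j) := sum_le_sum fun j _ => by
    rw [← exp_add, exp_le_exp]
    linarith [hθ i j]
  rw [div_le_div_iff₀ hS hcard, mul_sum]
  simpa [mul_comm] using this

theorem sum_perm_fin_succ {M : Type*} [AddCommMonoid M] {n : ℕ} (f : Perm (Fin (n + 1)) → M) :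
    ∑ σ, f σ = ∑ p, ∑ τ : Perm (Fin n), f (decomposeFin.symm (p, τ)) := by
  rw [← Fintype.sum_prod_type', decomposeFin.symm.sum_comp]

/-- `decomposeFin.symm (p, τ)` ranks `p` first and the others by `τ`, after relabelling the
items `Fin (n + 1) \ {p}` as `Fin n` through `swap 0 p ∘ Fin.succ`. -/
theorem PLprob_decomposeFin_symm {n : ℕ} (θ : Fin (n + 1) → ℝ) (p : Fin (n + 1))
    (τ : Perm (Fin n)) :
    PLprob θ (decomposeFin.symm (p, τ)) =
      exp (θ p) / (∑ j, exp (θ j)) * PLprob (fun j => θ (swap 0 p j.succ)) τ := by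
  rw [PLprob, PLprob, Fin.prod_univ_succ, decomposeFin_symm_apply_zero]
  congr 1
  · rw [show Ici (0 : Fin (n + 1)) = univ from Ici_bot,
      Equiv.sum_comp (decomposeFin.symm (p, τ)) fun j => exp (θ j)]
  · simp only [Fin.sum_Ici_succ, decomposeFin_symm_apply_succ]

theorem sum_PLprob_eq_one {n : ℕ} (θ : Fin n → ℝ) : ∑ σ, PLprob θ σ = 1 := by
  induction n with
  | zero => simp [PLprob]
  | succ n ih =>
    have hS : ∑ j, exp (θ j) ≠ 0 := (sum_pos (fun j _ => exp_pos _) univ_nonempty).ne'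
    simp_rw [sum_perm_fin_succ, PLprob_decomposeFin_symm, ← mul_sum, ih, mul_one, ← sum_div,
      div_self hS]

theorem sum_PLprob_apply_eq_le {n : ℕ} (θ : Fin n → ℝ) {c : ℝ} (hθ : ∀ j k, θ j - θ k ≤ c)
    (m i : Fin n) : ∑ σ with σ m = i, PLprob θ σ ≤ exp c / (n - m) := by
  induction n with
  | zero => exact m.elim0
  | succ n ih =>
    rw [sum_filter, sum_perm_fin_succ]
    cases m using Fin.cases with
    | zero =>
      simpa [decomposeFin_symm_apply_zero, PLprob_decomposeFin_symm, ← mul_sum, sum_PLprob_eq_one] using exp_div_sum_exp_le θ hθ i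
    | succ j =>
      have hS : ∑ j, exp (θ j) ≠ 0 := (sum_pos (fun j _ => exp_pos _) univ_nonempty).ne'
      have hsub : ∀ θ' : Fin n → ℝ, (∀ j k, θ' j - θ' k ≤ c) → ∀ k : Fin (n + 1),
          ∑ τ : Perm (Fin n), (if (τ j).succ = k then PLprob θ' τ else 0) ≤ exp c / (n - j) := by
        intro θ' hθ' k
        cases k using Fin.cases with
        | zero =>
          simp only [Fin.succ_ne_zero, if_false, sum_const_zero]
          exact div_nonneg (exp_pos c).le (sub_nonneg.mpr (by exact_mod_cast j.isLt.le))
        | succ i' => simpa only [Fin.succ_inj, ← sum_filter] using ih θ' hθ' j i'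
      calc ∑ p, ∑ τ : Perm (Fin n),
            (if decomposeFin.symm (p, τ) j.succ = i then PLprob θ (decomposeFin.symm (p, τ)) else 0)
          = ∑ p, exp (θ p) / (∑ j, exp (θ j)) * ∑ τ : Perm (Fin n),
              (if (τ j).succ = swap 0 p i then PLprob (fun k => θ (swap 0 p k.succ)) τ else 0) := by
            simp_rw [decomposeFin_symm_apply_succ, swap_apply_eq_iff, PLprob_decomposeFin_symm,
              mul_sum, mul_ite, mul_zero]
        _ ≤ ∑ p, exp (θ p) / (∑ j, exp (θ j)) * (exp c / (n - j)) := by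
            gcongr with p
            exact hsub _ (fun _ _ => hθ _ _) _
        _ = exp c / ((n + 1 : ℕ) - (j.succ : ℕ)) := by
            rw [← sum_mul, ← sum_div, div_self hS, one_mul, Fin.val_succ]
            push_cast
            ring_nf

/-- Under the PL model on `κ` items with weights bounded by `b`, the
probability that a fixed item `i` is placed at position `ℓ ∈ {1, …, κ−1}` is at
most `e^{6b}/(κ−ℓ)`. -/
theorem pl_position_prob_upper_bound (κ : ℕ) (b : ℝ) (hb : 0 ≤ b)
    (θ : Fin κ → ℝ) (hθ : ∀ i, |θ i| ≤ b) (i : Fin κ)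
    (ℓ : ℕ) (hℓ : 1 ≤ ℓ) (hℓκ : ℓ ≤ κ - 1) :
    ∑ σ ∈ Finset.univ.filter
        (fun σ : Equiv.Perm (Fin κ) => (σ.symm i : ℕ) + 1 = ℓ),
      PLprob θ σ ≤ Real.exp (6 * b) / ((κ : ℝ) - ℓ) := by
  obtain ⟨m, hm⟩ : ∃ m : Fin κ, (m : ℕ) = ℓ - 1 := ⟨⟨ℓ - 1, by omega⟩, rfl⟩
  have hposition : ∀ σ : Perm (Fin κ), (σ.symm i : ℕ) + 1 = ℓ ↔ σ m = i := fun σ => by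
    rw [eq_comm (a := σ m), ← symm_apply_eq, Fin.ext_iff]
    omega
  have hspread : ∀ j k, θ j - θ k ≤ 2 * b := fun j k => by
    linarith [abs_le.mp (hθ j), abs_le.mp (hθ k)]
  have hℓκ' : (ℓ : ℝ) < κ := by exact_mod_cast (by omega : ℓ < κ)
  rw [filter_congr fun σ _ => hposition σ]
  refine (sum_PLprob_apply_eq_le θ hspread m i).trans ?_
  rw [hm, Nat.cast_sub hℓ, Nat.cast_one]
  gcongr <;> linarith
end

section
/- Let m, r be positive integers with m ≤ r, and define η = ∑_{u=0}^{m−1} (1/(r−u) + u(m−u)/(m(r−u)²)) + ∑_{0≤u<u'≤m−1} (2u(m−u'))/(m(r−u)(r−u')). Then η ≥ 0 and the identity (1/m)(∑_{u=0}^{m−1}(m−u)/(r−u))² − ∑_{u=0}^{m−1}(∑_{u'=0}^{u} 1/(r−u'))² = −∑_{u=0}^{m−1} u(m−u)/(m(r−u)²) − ∑_{0≤u<u'≤m−1} 2u(m−u')/(m(r−u)(r−u')) holds. -/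
open Finset

private def bb (a : ℕ → ℝ) (u : ℕ) : ℝ := ∑ k ∈ range (u + 1), a k

private lemma lemC (a : ℕ → ℝ) (m : ℕ) :
    ∑ u ∈ range m, ∑ k ∈ Ico (u + 1) (m + 1), a k
      = ∑ k ∈ range (m + 1), (k : ℝ) * a k := by
  induction m with
  | zero => simp
  | succ n ih =>
    rw [sum_range_succ, sum_range_succ (fun k => (k : ℝ) * a k), ← ih]
    have h1 : ∀ u ∈ range n, ∑ k ∈ Ico (u + 1) (n + 2), a k
        = (∑ k ∈ Ico (u + 1) (n + 1), a k) + a (n + 1) := by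
      intro u hu
      rw [mem_range] at hu
      rw [sum_Ico_succ_top (by omega)]
    rw [sum_congr rfl h1]
    have h2 : ∑ k ∈ Ico (n + 1) (n + 2), a k = a (n + 1) := by
      rw [sum_Ico_succ_top (le_refl _), Ico_self, sum_empty, zero_add]
    rw [h2, sum_add_distrib, sum_const, card_range, nsmul_eq_mul]
    push_cast
    ring

private lemma lemB (a : ℕ → ℝ) (m : ℕ) :
    ∑ u ∈ range m, (∑ k ∈ Ico (u + 1) (m + 1), a k) ^ 2
      = ∑ u ∈ range (m + 1), (u : ℝ) * a u ^ 2
        + ∑ u' ∈ range (m + 1), ∑ u ∈ range u', 2 * (u : ℝ) * a u * a u' := by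
  induction m with
  | zero => simp
  | succ n ih =>
    have h1 : ∀ u ∈ range n, (∑ k ∈ Ico (u + 1) (n + 2), a k) ^ 2
        = (∑ k ∈ Ico (u + 1) (n + 1), a k) ^ 2
          + 2 * a (n + 1) * (∑ k ∈ Ico (u + 1) (n + 1), a k)
          + a (n + 1) ^ 2 := by
      intro u hu
      rw [mem_range] at hu
      rw [sum_Ico_succ_top (by omega)]
      ring
    have hA : ∑ u ∈ range (n + 1), (∑ k ∈ Ico (u + 1) (n + 2), a k) ^ 2
        = (∑ u ∈ range n, (∑ k ∈ Ico (u + 1) (n + 1), a k) ^ 2)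
          + 2 * a (n + 1) * (∑ u ∈ range n, ∑ k ∈ Ico (u + 1) (n + 1), a k)
          + (n : ℝ) * a (n + 1) ^ 2 + a (n + 1) ^ 2 := by
      rw [sum_range_succ, sum_congr rfl h1]
      have h2 : (∑ k ∈ Ico (n + 1) (n + 2), a k) ^ 2 = a (n + 1) ^ 2 := by
        rw [sum_Ico_succ_top (le_refl _), Ico_self, sum_empty, zero_add]
      rw [h2, sum_add_distrib, sum_add_distrib, sum_const, card_range, ← mul_sum,
        nsmul_eq_mul]
    have hC := lemC a n
    have hR1 : ∑ u ∈ range (n + 1 + 1), (u : ℝ) * a u ^ 2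
        = (∑ u ∈ range (n + 1), (u : ℝ) * a u ^ 2)
          + (((n + 1 : ℕ) : ℝ)) * a (n + 1) ^ 2 := by
      rw [sum_range_succ (fun u => (u : ℝ) * a u ^ 2) (n + 1)]
    have hR2 : ∑ u' ∈ range (n + 1 + 1), ∑ u ∈ range u', 2 * (u : ℝ) * a u * a u'
        = (∑ u' ∈ range (n + 1), ∑ u ∈ range u', 2 * (u : ℝ) * a u * a u')
          + ∑ u ∈ range (n + 1), 2 * (u : ℝ) * a u * a (n + 1) := by
      rw [sum_range_succ (fun u' => ∑ u ∈ range u', 2 * (u : ℝ) * a u * a u') (n + 1)]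
    have hR3 : ∑ u ∈ range (n + 1), 2 * (u : ℝ) * a u * a (n + 1)
        = 2 * a (n + 1) * ∑ k ∈ range (n + 1), (k : ℝ) * a k := by
      rw [mul_sum]
      exact sum_congr rfl fun x hx => by ring
    push_cast at hA ih hC hR1 hR2 hR3 ⊢
    linear_combination hA + ih + 2 * a (n + 1) * hC - hR1 - hR2 - hR3

private lemma lemD (a : ℕ → ℝ) (m : ℕ) :
    (m : ℝ) * (∑ u ∈ range m, bb a u ^ 2) - (∑ u ∈ range m, bb a u) ^ 2
      = ∑ u ∈ range m, (u : ℝ) * ((m : ℝ) - u) * a u ^ 2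
        + ∑ u' ∈ range m, ∑ u ∈ range u',
            2 * (u : ℝ) * ((m : ℝ) - u') * a u * a u' := by
  induction m with
  | zero => simp
  | succ n ih =>
    have hdiff : ∀ u ∈ range n, bb a n - bb a u = ∑ k ∈ Ico (u + 1) (n + 1), a k := by
      intro u hu
      rw [mem_range] at hu
      simp only [bb]
      rw [sum_Ico_eq_sub a (by omega : u + 1 ≤ n + 1)]
    have hL : ((n : ℝ) + 1) * (∑ u ∈ range (n + 1), bb a u ^ 2)
          - (∑ u ∈ range (n + 1), bb a u) ^ 2
        = ((n : ℝ) * (∑ u ∈ range n, bb a u ^ 2) - (∑ u ∈ range n, bb a u) ^ 2)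
          + ∑ u ∈ range n, (bb a n - bb a u) ^ 2 := by
      rw [sum_range_succ (fun u => bb a u ^ 2) n, sum_range_succ (bb a) n]
      have hsq : ∑ u ∈ range n, (bb a n - bb a u) ^ 2
          = (n : ℝ) * bb a n ^ 2 - 2 * bb a n * (∑ u ∈ range n, bb a u)
            + ∑ u ∈ range n, bb a u ^ 2 := by
        have h : ∀ u ∈ range n, (bb a n - bb a u) ^ 2
            = bb a n ^ 2 - 2 * bb a n * bb a u + bb a u ^ 2 := fun u hu => by ring
        rw [sum_congr rfl h, sum_add_distrib, sum_sub_distrib, sum_const,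
          card_range, ← mul_sum, nsmul_eq_mul]
      rw [hsq]
      ring
    have hB : ∑ u ∈ range n, (bb a n - bb a u) ^ 2
        = ∑ u ∈ range (n + 1), (u : ℝ) * a u ^ 2
          + ∑ u' ∈ range (n + 1), ∑ u ∈ range u', 2 * (u : ℝ) * a u * a u' := by
      rw [sum_congr rfl (fun u hu => by rw [hdiff u hu])]
      exact lemB a n
    have hR1 : ∑ u ∈ range (n + 1), (u : ℝ) * (((n + 1 : ℕ) : ℝ) - u) * a u ^ 2
        = (∑ u ∈ range n, (u : ℝ) * ((n : ℝ) - u) * a u ^ 2)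
          + ∑ u ∈ range (n + 1), (u : ℝ) * a u ^ 2 := by
      rw [sum_range_succ (fun u => (u : ℝ) * (((n + 1 : ℕ) : ℝ) - (u : ℝ)) * a u ^ 2) n,
        sum_range_succ (fun u => (u : ℝ) * a u ^ 2) n]
      have h : ∀ u ∈ range n, (u : ℝ) * (((n + 1 : ℕ) : ℝ) - u) * a u ^ 2
          = (u : ℝ) * ((n : ℝ) - u) * a u ^ 2 + (u : ℝ) * a u ^ 2 := by
        intro u hu; push_cast; ring
      rw [sum_congr rfl h, sum_add_distrib]
      push_cast
      ring
    have hR2 : ∑ u' ∈ range (n + 1), ∑ u ∈ range u',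
          2 * (u : ℝ) * (((n + 1 : ℕ) : ℝ) - u') * a u * a u'
        = (∑ u' ∈ range n, ∑ u ∈ range u', 2 * (u : ℝ) * ((n : ℝ) - u') * a u * a u')
          + ∑ u' ∈ range (n + 1), ∑ u ∈ range u', 2 * (u : ℝ) * a u * a u' := by
      rw [sum_range_succ (fun u' => ∑ u ∈ range u',
            2 * (u : ℝ) * (((n + 1 : ℕ) : ℝ) - (u' : ℝ)) * a u * a u') n,
        sum_range_succ (fun u' => ∑ u ∈ range u', 2 * (u : ℝ) * a u * a u') n]
      have h : ∀ u' ∈ range n, (∑ u ∈ range u',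
            2 * (u : ℝ) * (((n + 1 : ℕ) : ℝ) - u') * a u * a u')
          = (∑ u ∈ range u', 2 * (u : ℝ) * ((n : ℝ) - u') * a u * a u')
            + ∑ u ∈ range u', 2 * (u : ℝ) * a u * a u' := by
        intro u' hu'
        rw [← sum_add_distrib]
        exact sum_congr rfl fun u hu => by push_cast; ring
      rw [sum_congr rfl h, sum_add_distrib]
      have htop : ∑ u ∈ range n, 2 * (u : ℝ) * (((n + 1 : ℕ) : ℝ) - (n : ℝ)) * a u * a n
          = ∑ u ∈ range n, 2 * (u : ℝ) * a u * a n :=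
        sum_congr rfl fun u hu => by push_cast; ring
      rw [htop]
      ring
    push_cast at hL hB ih hR1 hR2 ⊢
    linear_combination hL + hB + ih - hR1 - hR2

private lemma lemE (a : ℕ → ℝ) (m : ℕ) :
    ∑ u ∈ range m, bb a u = ∑ k ∈ range m, ((m : ℝ) - k) * a k := by
  induction m with
  | zero => simp
  | succ n ih =>
    have h1 : ∑ k ∈ range (n + 1), (((n + 1 : ℕ) : ℝ) - k) * a k
        = (∑ k ∈ range n, ((n : ℝ) - k) * a k) + ∑ k ∈ range (n + 1), a k := by
      rw [sum_range_succ (fun k => (((n + 1 : ℕ) : ℝ) - (k : ℝ)) * a k) n,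
        sum_range_succ a n]
      have h : ∀ k ∈ range n, (((n + 1 : ℕ) : ℝ) - k) * a k
          = ((n : ℝ) - k) * a k + a k := by
        intro k hk; push_cast; ring
      rw [sum_congr rfl h, sum_add_distrib]
      push_cast
      ring
    rw [sum_range_succ, ih, h1, bb]

/-- The quantity `η` from the Cramér–Rao computation is nonnegative, and the
algebraic identity behind Equation (eq:lb2) holds:
`(1/m)(∑_{u<m}(m−u)/(r−u))² − ∑_{u<m}(∑_{u'≤u} 1/(r−u'))²
  = −∑_{u<m} u(m−u)/(m(r−u)²) − ∑_{u<u'<m} 2u(m−u')/(m(r−u)(r−u'))`. -/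
theorem eta_nonneg_and_fisher_identity (m r : ℕ) (hm : 1 ≤ m) (hmr : m ≤ r) :
    (0 ≤ (∑ u ∈ Finset.range m,
            (1 / ((r : ℝ) - u) + u * ((m : ℝ) - u) / (m * ((r : ℝ) - u) ^ 2)))
          + ∑ u' ∈ Finset.range m, ∑ u ∈ Finset.range u',
              2 * u * ((m : ℝ) - u') / (m * ((r : ℝ) - u) * ((r : ℝ) - u'))) ∧
    ((1 / (m : ℝ)) * (∑ u ∈ Finset.range m, ((m : ℝ) - u) / ((r : ℝ) - u)) ^ 2
        - ∑ u ∈ Finset.range m,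
            (∑ u' ∈ Finset.range (u + 1), 1 / ((r : ℝ) - u')) ^ 2
      = -(∑ u ∈ Finset.range m,
            u * ((m : ℝ) - u) / (m * ((r : ℝ) - u) ^ 2))
        - ∑ u' ∈ Finset.range m, ∑ u ∈ Finset.range u',
            2 * u * ((m : ℝ) - u') / (m * ((r : ℝ) - u) * ((r : ℝ) - u'))) := by
  have hm0 : (m : ℝ) ≠ 0 := by positivity
  have hru : ∀ u : ℕ, u < m → (0 : ℝ) < (r : ℝ) - u := by
    intro u hu
    have : (u : ℝ) < (r : ℝ) := by exact_mod_cast lt_of_lt_of_le hu hmr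
    linarith
  have hmu : ∀ u : ℕ, u < m → (0 : ℝ) ≤ (m : ℝ) - u := by
    intro u hu
    have : (u : ℝ) ≤ (m : ℝ) := by exact_mod_cast le_of_lt hu
    linarith
  constructor
  · apply add_nonneg
    · apply sum_nonneg
      intro u hu
      rw [mem_range] at hu
      have h1 := hru u hu
      have h2 := hmu u hu
      have hmpos : (0 : ℝ) < m := by positivity
      positivity
    · apply sum_nonneg
      intro u' hu'
      rw [mem_range] at hu'
      apply sum_nonneg
      intro u hu
      rw [mem_range] at hu
      have h1 := hru u (lt_trans hu hu')
      have h2 := hru u' hu'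
      have h3 := hmu u' hu'
      have hmpos : (0 : ℝ) < m := by positivity
      positivity
  · have hD := lemD (fun k => 1 / ((r : ℝ) - k)) m
    simp only [bb] at hD
    have e1 : ∑ u ∈ Finset.range m, ((m : ℝ) - u) / ((r : ℝ) - u)
        = ∑ u ∈ range m, ∑ k ∈ range (u + 1), 1 / ((r : ℝ) - k) := by
      have := lemE (fun k => 1 / ((r : ℝ) - k)) m
      simp only [bb] at this
      rw [this]
      exact sum_congr rfl fun u hu => by ring
    have e3 : ∑ u ∈ Finset.range m, (u : ℝ) * ((m : ℝ) - u) / (m * ((r : ℝ) - u) ^ 2)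
        = (1 / m) * ∑ u ∈ range m, (u : ℝ) * ((m : ℝ) - u) * (1 / ((r : ℝ) - u)) ^ 2 := by
      rw [mul_sum]
      refine sum_congr rfl fun u hu => ?_
      rw [mem_range] at hu
      have hr := (hru u hu).ne'
      field_simp
    have e4 : ∑ u' ∈ Finset.range m, ∑ u ∈ Finset.range u',
          2 * (u : ℝ) * ((m : ℝ) - u') / (m * ((r : ℝ) - u) * ((r : ℝ) - u'))
        = (1 / m) * ∑ u' ∈ range m, ∑ u ∈ range u',
            2 * (u : ℝ) * ((m : ℝ) - u') * (1 / ((r : ℝ) - u)) * (1 / ((r : ℝ) - u')) := by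
      rw [mul_sum]
      refine sum_congr rfl fun u' hu' => ?_
      rw [mem_range] at hu'
      rw [mul_sum]
      refine sum_congr rfl fun u hu => ?_
      rw [mem_range] at hu
      simp only [div_eq_mul_inv, mul_inv, one_mul]
      ring
    have h1m : (m : ℝ) * (1 / m) = 1 := by field_simp
    rw [e1, e3, e4]
    linear_combination (-(1 : ℝ) / m) * hD
      + (∑ u ∈ range m, (∑ k ∈ range (u + 1), 1 / ((r : ℝ) - k)) ^ 2) * h1m
end
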